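/- arXiv:2110.03970 — 2 statements merged into one kernel-verified Lean document; each statement's English description precedes it below -/
import Mathlib

section
/- The normalized vertical R-matrix R̄_{λμ}(z;p) := 𝔮^{-(|λ|+|μ|)} ∏_{(i,j)∈λ}∏_{(k,l)∈μ} [θ_p(q₁⁻¹ z⁻¹ x_{kl}/x_{ij}) θ_p(q₂⁻¹ z⁻¹ x_{kl}/x_{ij}) θ_p(q₃⁻¹ z⁻¹ x_{kl}/x_{ij})] / [θ_p(q₁ z⁻¹ x_{kl}/x_{ij}) θ_p(q₂ z⁻¹ x_{kl}/x_{ij}) θ_p(q₃ z⁻¹ x_{kl}/x_{ij})] · ∏_{(i,j)∈λ} θ_p(z⁻¹ q₃/x_{ij})/θ_p(z⁻¹/x_{ij}) · ∏_{(i,j)∈μ} θ_p(x_{ij} z⁻¹)/θ_p(q₁q₂ x_{ij} z⁻¹), with x_{ij} = q₁^{j-1} q₂^{i-1} and q₁q₂q₃ = 1, satisfies the unitarity relation R̄_{μλ}(z⁻¹;p) = R̄_{λμ}(z;p)⁻¹. -/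
/-!
Inverting the argument of `θ_p` costs only an elementary factor: peeling the `k = 0` factor off
`(u⁻¹;p)_∞` and shifting `(p u;p)_∞` gives `θ_p(u⁻¹) = -u⁻¹ θ_p(u)`. Replacing `z` by `z⁻¹` and
exchanging `λ` and `μ` inverts every argument of `R̄`. In a factor attached to a pair of boxes the
elementary factors cancel, since numerator and denominator arguments have the same product
(`q₁q₂q₃ = 1`); a factor attached to a single box is inverted up to a factor `q₃`, and these
`q₃^{|λ|+|μ|} = 𝔮^{2(|λ|+|μ|)}` turn the normalisation `𝔮^{-(|λ|+|μ|)}` into its inverse.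
-/

open Complex Finset

/-- The short theta function `θ_p(z) = (z;p)_∞ (p z⁻¹;p)_∞`. -/
noncomputable def theta (p z : ℂ) : ℂ :=
  (∏' k : ℕ, (1 - z * p ^ k)) * ∏' k : ℕ, (1 - z⁻¹ * p ^ (k + 1))

/-- `x_{ij} = q₁^{j-1} q₂^{i-1}` in 0-based coordinates. -/
noncomputable def xbox (q₁ q₂ : ℂ) (i j : ℕ) : ℂ := q₁ ^ j * q₂ ^ i

/-- The normalized vertical `R`-matrix `R̄_{λμ}(z;p)`, for partitions encoded as
functions `ℕ → ℕ` vanishing from indices `Nl` (resp. `Nm`) on. -/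
noncomputable def Rbar (p q₁ q₂ q₃ 𝔮 : ℂ) (lam mu : ℕ → ℕ) (Nl Nm : ℕ) (z : ℂ) : ℂ :=
  𝔮 ^ (-(((∑ i ∈ Finset.range Nl, lam i) + ∑ i ∈ Finset.range Nm, mu i : ℕ) : ℤ)) *
    (∏ i ∈ Finset.range Nl, ∏ j ∈ Finset.range (lam i),
      ∏ k ∈ Finset.range Nm, ∏ l ∈ Finset.range (mu k),
        (theta p (q₁⁻¹ * z⁻¹ * xbox q₁ q₂ k l / xbox q₁ q₂ i j) *
            theta p (q₂⁻¹ * z⁻¹ * xbox q₁ q₂ k l / xbox q₁ q₂ i j) *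
            theta p (q₃⁻¹ * z⁻¹ * xbox q₁ q₂ k l / xbox q₁ q₂ i j)) /
          (theta p (q₁ * z⁻¹ * xbox q₁ q₂ k l / xbox q₁ q₂ i j) *
            theta p (q₂ * z⁻¹ * xbox q₁ q₂ k l / xbox q₁ q₂ i j) *
            theta p (q₃ * z⁻¹ * xbox q₁ q₂ k l / xbox q₁ q₂ i j))) *
    (∏ i ∈ Finset.range Nl, ∏ j ∈ Finset.range (lam i),
      theta p (z⁻¹ * q₃ / xbox q₁ q₂ i j) / theta p (z⁻¹ / xbox q₁ q₂ i j)) *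
    ∏ i ∈ Finset.range Nm, ∏ j ∈ Finset.range (mu i),
      theta p (xbox q₁ q₂ i j * z⁻¹) / theta p (q₁ * q₂ * xbox q₁ q₂ i j * z⁻¹)

section Theta

variable {p : ℂ}

lemma multipliable_one_sub_mul_pow (w : ℂ) (hp : ‖p‖ < 1) :
    Multipliable fun k : ℕ => 1 - w * p ^ k := by
  simp_rw [sub_eq_add_neg]
  refine multipliable_one_add_of_summable ?_
  simpa [norm_mul, norm_pow] using (summable_geometric_of_lt_one (norm_nonneg p) hp).mul_left ‖w‖

lemma tprod_one_sub_mul_pow (w : ℂ) (hp : ‖p‖ < 1) :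
    ∏' k : ℕ, (1 - w * p ^ k) = (1 - w) * ∏' k : ℕ, (1 - w * p ^ (k + 1)) := by
  simpa using tprod_eq_zero_mul' (f := fun k : ℕ => 1 - w * p ^ k)
    ((multipliable_one_sub_mul_pow (w * p) hp).congr fun k => by ring)

lemma theta_inv (hp : ‖p‖ < 1) {u : ℂ} (hu : u ≠ 0) : theta p u⁻¹ = -u⁻¹ * theta p u := by
  rw [theta, theta, inv_inv, tprod_one_sub_mul_pow _ hp, tprod_one_sub_mul_pow _ hp]
  field_simp
  ring

lemma theta_inv_div_theta_inv (hp : ‖p‖ < 1) {a b : ℂ} (ha : a ≠ 0) (hb : b ≠ 0) :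
    theta p a⁻¹ / theta p b⁻¹ = b / a * (theta p a / theta p b) := by
  rw [theta_inv hp ha, theta_inv hp hb, mul_div_mul_comm]
  congr 1
  field_simp

lemma theta_inv_mul_theta_inv_mul_theta_inv (hp : ‖p‖ < 1) {a b c : ℂ}
    (ha : a ≠ 0) (hb : b ≠ 0) (hc : c ≠ 0) :
    theta p a⁻¹ * theta p b⁻¹ * theta p c⁻¹ =
      -(a * b * c)⁻¹ * (theta p a * theta p b * theta p c) := by
  rw [theta_inv hp ha, theta_inv hp hb, theta_inv hp hc]
  ring

end Theta

section Factors

variable (p q₁ q₂ q₃ : ℂ)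

/-- The factor of `R̄_{λμ}(z;p)` attached to a box `y` of `λ` and a box `x` of `μ`. -/
noncomputable def pairFactor (z x y : ℂ) : ℂ :=
  theta p (q₁⁻¹ * z⁻¹ * x / y) * theta p (q₂⁻¹ * z⁻¹ * x / y) * theta p (q₃⁻¹ * z⁻¹ * x / y) /
    (theta p (q₁ * z⁻¹ * x / y) * theta p (q₂ * z⁻¹ * x / y) * theta p (q₃ * z⁻¹ * x / y))

/-- The factor of `R̄_{λμ}(z;p)` attached to a box `x` of `λ`. -/
noncomputable def boxFactorLeft (z x : ℂ) : ℂ :=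
  theta p (z⁻¹ * q₃ / x) / theta p (z⁻¹ / x)

/-- The factor of `R̄_{λμ}(z;p)` attached to a box `x` of `μ`. -/
noncomputable def boxFactorRight (z x : ℂ) : ℂ :=
  theta p (x * z⁻¹) / theta p (q₁ * q₂ * x * z⁻¹)

variable {p q₁ q₂ q₃}

lemma pairFactor_inv (hp : ‖p‖ < 1) (hq : q₁ * q₂ * q₃ = 1) {z x y : ℂ}
    (hz : z ≠ 0) (hx : x ≠ 0) (hy : y ≠ 0) :
    pairFactor p q₁ q₂ q₃ z⁻¹ y x = (pairFactor p q₁ q₂ q₃ z x y)⁻¹ := by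
  have hq₁ : q₁ ≠ 0 := left_ne_zero_of_mul (left_ne_zero_of_mul_eq_one hq)
  have hq₂ : q₂ ≠ 0 := right_ne_zero_of_mul (left_ne_zero_of_mul_eq_one hq)
  have hq₃ : q₃ ≠ 0 := right_ne_zero_of_mul_eq_one hq
  set w := z⁻¹ * x / y
  have hw : w ≠ 0 := by positivity
  have hinv : ∀ q : ℂ, q * z * y / x = (q⁻¹ * w)⁻¹ := fun q => by
    simp only [w]; field_simp
  have hmul : ∀ q : ℂ, q * z⁻¹ * x / y = q * w := fun q => by ring
  have hcube : ∀ a b c : ℂ, a * b * c = 1 → a * w * (b * w) * (c * w) = w ^ 3 := fun a b c h => by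
    linear_combination w ^ 3 * h
  have hcube' : q₁⁻¹ * q₂⁻¹ * q₃⁻¹ = 1 := by rw [← mul_inv, ← mul_inv, hq, inv_one]
  unfold pairFactor
  simp only [inv_inv, hinv, hmul]
  rw [theta_inv_mul_theta_inv_mul_theta_inv hp, theta_inv_mul_theta_inv_mul_theta_inv hp,
    hcube _ _ _ hq, hcube _ _ _ hcube', mul_div_mul_left, inv_div] <;> simp [hw, hq₁, hq₂, hq₃]

lemma boxFactorLeft_inv (hp : ‖p‖ < 1) (hq : q₁ * q₂ * q₃ = 1) {z x : ℂ}
    (hz : z ≠ 0) (hx : x ≠ 0) :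
    boxFactorLeft p q₃ z⁻¹ x = q₃ * (boxFactorRight p q₁ q₂ z x)⁻¹ := by
  have hq₁₂ : q₁ * q₂ ≠ 0 := left_ne_zero_of_mul_eq_one hq
  have hq₃ : q₃ = (q₁ * q₂)⁻¹ := eq_inv_of_mul_eq_one_right hq
  have h₁ : z⁻¹⁻¹ * q₃ / x = (q₁ * q₂ * x * z⁻¹)⁻¹ := by rw [hq₃]; field_simp
  have h₂ : z⁻¹⁻¹ / x = (x * z⁻¹)⁻¹ := by field_simp
  rw [boxFactorLeft, boxFactorRight, h₁, h₂, theta_inv_div_theta_inv hp (by positivity)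
    (by positivity), inv_div, hq₃]
  congr 1
  field_simp

lemma boxFactorRight_inv (hp : ‖p‖ < 1) (hq : q₁ * q₂ * q₃ = 1) {z x : ℂ}
    (hz : z ≠ 0) (hx : x ≠ 0) :
    boxFactorRight p q₁ q₂ z⁻¹ x = q₃ * (boxFactorLeft p q₃ z x)⁻¹ := by
  have hq₃ : q₃ ≠ 0 := right_ne_zero_of_mul_eq_one hq
  rw [← inv_inv z, boxFactorLeft_inv hp hq (inv_ne_zero hz) hx, inv_inv, mul_inv, inv_inv,
    mul_inv_cancel_left₀ hq₃]

end Factors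

section Boxes

variable {M : Type*}

lemma prod_boxes_comm [CommMonoid M] (a b : ℕ) (s t : ℕ → ℕ) (f : ℕ → ℕ → ℕ → ℕ → M) :
    ∏ i ∈ range a, ∏ j ∈ range (s i), ∏ k ∈ range b, ∏ l ∈ range (t k), f i j k l =
      ∏ k ∈ range b, ∏ l ∈ range (t k), ∏ i ∈ range a, ∏ j ∈ range (s i), f i j k l := by
  simp only [prod_sigma' (β := M) (range a) (fun i => range (s i)),
    prod_sigma' (β := M) (range b) (fun k => range (t k))]
  exact prod_comm

lemma prod_boxes_const_mul_inv [DivisionCommMonoid M] (a : ℕ) (s : ℕ → ℕ) (c : M)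
    (f : ℕ → ℕ → M) :
    ∏ i ∈ range a, ∏ j ∈ range (s i), c * (f i j)⁻¹ =
      c ^ (∑ i ∈ range a, s i) * (∏ i ∈ range a, ∏ j ∈ range (s i), f i j)⁻¹ := by
  simp only [prod_mul_distrib, prod_inv_distrib, prod_const, card_range, prod_pow_eq_pow_sum]

end Boxes

lemma xbox_ne_zero {q₁ q₂ : ℂ} (h : q₁ * q₂ ≠ 0) (i j : ℕ) : xbox q₁ q₂ i j ≠ 0 :=
  mul_ne_zero (pow_ne_zero _ (left_ne_zero_of_mul h)) (pow_ne_zero _ (right_ne_zero_of_mul h))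

lemma Rbar_eq (p q₁ q₂ q₃ 𝔮 : ℂ) (lam mu : ℕ → ℕ) (Nl Nm : ℕ) (z : ℂ) :
    Rbar p q₁ q₂ q₃ 𝔮 lam mu Nl Nm z =
      𝔮 ^ (-(((∑ i ∈ range Nl, lam i) + ∑ i ∈ range Nm, mu i : ℕ) : ℤ)) *
        (∏ i ∈ range Nl, ∏ j ∈ range (lam i), ∏ k ∈ range Nm, ∏ l ∈ range (mu k),
          pairFactor p q₁ q₂ q₃ z (xbox q₁ q₂ k l) (xbox q₁ q₂ i j)) *
        (∏ i ∈ range Nl, ∏ j ∈ range (lam i), boxFactorLeft p q₃ z (xbox q₁ q₂ i j)) *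
        ∏ i ∈ range Nm, ∏ j ∈ range (mu i), boxFactorRight p q₁ q₂ z (xbox q₁ q₂ i j) :=
  rfl

lemma zpow_neg_add_mul_pow_mul_pow_of_sq_eq {𝔮 q : ℂ} (h𝔮 : 𝔮 ^ 2 = q) (hq : q ≠ 0) (m n : ℕ) :
    𝔮 ^ (-((m + n : ℕ) : ℤ)) * q ^ m * q ^ n = (𝔮 ^ (-((n + m : ℕ) : ℤ)))⁻¹ := by
  subst h𝔮
  have h𝔮 : 𝔮 ≠ 0 := fun h => hq (by simp [h])
  rw [zpow_neg, zpow_neg, inv_inv, zpow_natCast, zpow_natCast]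
  field_simp
  ring

theorem Rbar_unitarity_general (p q₁ q₂ q₃ 𝔮 z : ℂ)
    (hq : q₁ * q₂ * q₃ = 1)
    (h𝔮 : 𝔮 ^ 2 = q₃) (hz : z ≠ 0) (hp1 : ‖p‖ < 1)
    (lam mu : ℕ → ℕ)
    (Nl Nm : ℕ) :
    Rbar p q₁ q₂ q₃ 𝔮 mu lam Nm Nl z⁻¹ = (Rbar p q₁ q₂ q₃ 𝔮 lam mu Nl Nm z)⁻¹ := by
  have hx := xbox_ne_zero (left_ne_zero_of_mul_eq_one hq)
  have hpairs : ∏ i ∈ range Nm, ∏ j ∈ range (mu i), ∏ k ∈ range Nl, ∏ l ∈ range (lam k),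
      pairFactor p q₁ q₂ q₃ z⁻¹ (xbox q₁ q₂ k l) (xbox q₁ q₂ i j) =
      (∏ i ∈ range Nl, ∏ j ∈ range (lam i), ∏ k ∈ range Nm, ∏ l ∈ range (mu k),
        pairFactor p q₁ q₂ q₃ z (xbox q₁ q₂ k l) (xbox q₁ q₂ i j))⁻¹ := by
    rw [prod_boxes_comm Nl Nm lam mu]
    simp only [← prod_inv_distrib]
    refine prod_congr rfl fun i _ => prod_congr rfl fun j _ => prod_congr rfl fun k _ =>
      prod_congr rfl fun l _ => pairFactor_inv hp1 hq hz (hx i j) (hx k l)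
  rw [Rbar_eq, Rbar_eq, hpairs]
  simp only [boxFactorLeft_inv hp1 hq hz (hx _ _), boxFactorRight_inv hp1 hq hz (hx _ _),
    prod_boxes_const_mul_inv, mul_inv]
  rw [← zpow_neg_add_mul_pow_mul_pow_of_sq_eq h𝔮 (right_ne_zero_of_mul_eq_one hq)]
  ring

/-- Unitarity of the normalized vertical `R`-matrix: `R̄_{μλ}(z⁻¹;p) = R̄_{λμ}(z;p)⁻¹`,
for generic `z` (so that none of the theta functions involved vanishes). -/
theorem Rbar_unitarity (p q₁ q₂ q₃ 𝔮 z : ℂ)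
    (hq : q₁ * q₂ * q₃ = 1) (hq₁ : q₁ ≠ 0) (hq₂ : q₂ ≠ 0)
    (h𝔮 : 𝔮 ^ 2 = q₃) (hz : z ≠ 0) (hp0 : 0 < ‖p‖) (hp1 : ‖p‖ < 1)
    (lam mu : ℕ → ℕ) (hlam : Antitone lam) (hmu : Antitone mu)
    (Nl Nm : ℕ) (hNl : ∀ i, Nl ≤ i → lam i = 0) (hNm : ∀ i, Nm ≤ i → mu i = 0)
    (hgen : ∀ a b : ℤ, theta p (z * q₁ ^ a * q₂ ^ b) ≠ 0 ∧
      theta p (z⁻¹ * q₁ ^ a * q₂ ^ b) ≠ 0) :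
    Rbar p q₁ q₂ q₃ 𝔮 mu lam Nm Nl z⁻¹ = (Rbar p q₁ q₂ q₃ 𝔮 lam mu Nl Nm z)⁻¹ :=
  Rbar_unitarity_general p q₁ q₂ q₃ 𝔮 z hq h𝔮 hz hp1 lam mu Nl Nm
end

section
/- For λ a partition of length at most n, the Macdonald identity (1-q) Σ_{s∈λ} q^{a(s)} t^{ℓ(s)+1} = Σ_{i=1}^{n} (t - q^{λ_i} t^{n+1-i}) - (1-t) Σ_{1≤i<j≤n} q^{λ_i - λ_j} t^{j-i} holds, where a(s) and ℓ(s) are the arm and leg lengths of the box s in λ. -/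
/-!
Induction on `λ₁`. Deleting the first column, `λ ↦ (λᵢ - 1)ᵢ`, keeps the arm and leg of
every remaining box, and the deleted boxes `(i, 1)`, `i ≤ m = ℓ(λ)`, contribute
`q^{λᵢ-1} t^{m+1-i}` to the left-hand sum. On the right, `q^{λᵢ-λⱼ}` only changes for pairs
`i ≤ m < j`; summing `t^{j-i}` over `m < j ≤ n` telescopes, and what is left cancels the change
of the first sum up to exactly `(1 - q) Σ_{i ≤ m} q^{λᵢ-1} t^{m+1-i}`. When `λ = 0` both sides
vanish.
-/

open Finset

section
variable {R : Type*} [CommRing R] (q t : R) {n m : ℕ} {lam : ℕ → ℕ}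

theorem sum_range_eq_add_sum_range {M : Type*} [AddCommMonoid M] (hmn : m ≤ n)
    {f g h : ℕ → M} (hlt : ∀ i < m, f i = g i + h i) (hge : ∀ i, m ≤ i → i < n → f i = g i) :
    ∑ i ∈ range n, f i = ∑ i ∈ range n, g i + ∑ i ∈ range m, h i := by
  rw [← sum_range_add_sum_Ico f hmn, ← sum_range_add_sum_Ico g hmn,
    sum_congr rfl fun i hi => hlt i (mem_range.mp hi), sum_add_distrib,
    sum_congr rfl fun i hi => hge i (mem_Ico.mp hi).1 (mem_Ico.mp hi).2]
  abel

theorem one_sub_mul_sum_Ico_pow_sub {i a b : ℕ} (hia : i ≤ a) (hab : a ≤ b) :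
    (1 - t) * ∑ j ∈ Ico a b, t ^ (j - i) = t ^ (a - i) - t ^ (b - i) := by
  have hshift : ∑ j ∈ Ico a b, t ^ (j - i) = t ^ (a - i) * ∑ k ∈ range (b - a), t ^ k := by
    rw [sum_Ico_eq_sum_range, mul_sum]
    exact sum_congr rfl fun k _ => by rw [← pow_add]; congr 1; omega
  rw [hshift, mul_left_comm, mul_neg_geom_sum, mul_sub, mul_one, ← pow_add]
  congr 2
  omega

theorem sum_range_sum_range_eq_sum_sum_Ico {M : Type*} [AddCommMonoid M] (f : ℕ → ℕ → M) :
    ∑ j ∈ range n, ∑ i ∈ range j, f i j = ∑ i ∈ range n, ∑ j ∈ Ico (i + 1) n, f i j :=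
  sum_comm' fun j i => by simp only [mem_range, mem_Ico]; omega

theorem exists_pos_iff_lt (hanti : Antitone lam) (hbd : ∀ i, n ≤ i → lam i = 0) :
    ∃ m ≤ n, ∀ i, 0 < lam i ↔ i < m := by
  have hex : ∃ k, lam k = 0 := ⟨n, hbd n le_rfl⟩
  refine ⟨Nat.find hex, Nat.find_min' hex (hbd n le_rfl), fun i => ⟨fun hi => ?_, fun hi => ?_⟩⟩
  · by_contra! hge
    have := hanti hge
    have := Nat.find_spec hex
    omega
  · exact Nat.pos_of_ne_zero (Nat.find_min hex hi)

def colLen (n : ℕ) (lam : ℕ → ℕ) (j : ℕ) : ℕ :=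
  ((range n).filter fun k => j < lam k).card

theorem colLen_pred (j : ℕ) : colLen n (fun i => lam i - 1) j = colLen n lam (j + 1) := by
  unfold colLen
  congr 1
  exact filter_congr fun k _ => Nat.lt_sub_iff_add_lt

theorem colLen_zero (hmn : m ≤ n) (hpos : ∀ i, 0 < lam i ↔ i < m) : colLen n lam 0 = m := by
  unfold colLen
  convert card_range m
  ext k
  simp only [mem_filter, mem_range, hpos]
  omega

/-- Rows and columns are indexed from `0`, so the box `(i, j)` has arm `lam i - j - 1` and
leg plus one `colLen n lam j - i`. -/
def armLegSum (q t : R) (n : ℕ) (lam : ℕ → ℕ) : R :=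
  ∑ i ∈ range n, ∑ j ∈ range (lam i), q ^ (lam i - j - 1) * t ^ (colLen n lam j - i)

def pairSum (q t : R) (n : ℕ) (lam : ℕ → ℕ) : R :=
  ∑ j ∈ range n, ∑ i ∈ range j, q ^ (lam i - lam j) * t ^ (j - i)

def macdonaldRhs (q t : R) (n : ℕ) (lam : ℕ → ℕ) : R :=
  (∑ i ∈ range n, (t - q ^ lam i * t ^ (n - i))) - (1 - t) * pairSum q t n lam

theorem macdonaldRhs_zero : macdonaldRhs q t n (fun _ => 0) = 0 := by
  rw [macdonaldRhs, pairSum, sum_range_sum_range_eq_sum_sum_Ico, mul_sum, sub_eq_zero]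
  refine sum_congr rfl fun i hi => ?_
  simp only [Nat.sub_self, pow_zero, one_mul]
  rw [one_sub_mul_sum_Ico_pow_sub t (i.le_add_right 1) (mem_range.mp hi), Nat.add_sub_cancel_left,
    pow_one]

theorem armLegSum_eq_pred_add (hmn : m ≤ n) (hpos : ∀ i, 0 < lam i ↔ i < m) :
    armLegSum q t n lam =
      armLegSum q t n (fun i => lam i - 1) + ∑ i ∈ range m, q ^ (lam i - 1) * t ^ (m - i) := by
  unfold armLegSum
  simp only [colLen_pred]
  refine sum_range_eq_add_sum_range hmn (fun i hi => ?_) (fun i hi _ => ?_)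
  · obtain ⟨k, hk⟩ : ∃ k, lam i = k + 1 := Nat.exists_eq_add_one.mpr ((hpos i).mpr hi)
    rw [hk, sum_range_succ', colLen_zero hmn hpos]
    simp only [Nat.add_sub_add_right, Nat.add_sub_cancel, Nat.sub_zero]
  · have : lam i = 0 := by have := hpos i; omega
    simp [this]

theorem one_sub_mul_pairSum_eq_pred_add (hmn : m ≤ n) (hpos : ∀ i, 0 < lam i ↔ i < m) :
    (1 - t) * pairSum q t n lam = (1 - t) * pairSum q t n (fun i => lam i - 1) +
      (1 - q) * ∑ i ∈ range m, q ^ (lam i - 1) * (t ^ (n - i) - t ^ (m - i)) := by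
  have hzero : ∀ i, m ≤ i → lam i = 0 := fun i hi => by have := hpos i; omega
  have hterm : ∀ j, ∀ i < j, q ^ (lam i - lam j) * t ^ (j - i) =
      q ^ (lam i - 1 - (lam j - 1)) * t ^ (j - i) +
        if i < m ∧ m ≤ j then (q - 1) * q ^ (lam i - 1) * t ^ (j - i) else 0 := by
    intro j i hij
    by_cases hj : m ≤ j
    · by_cases hi : i < m
      · obtain ⟨k, hk⟩ : ∃ k, lam i = k + 1 := Nat.exists_eq_add_one.mpr ((hpos i).mpr hi)
        rw [if_pos ⟨hi, hj⟩, hk, hzero j hj, Nat.add_sub_cancel, Nat.zero_sub, Nat.sub_zero,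
          Nat.sub_zero]
        ring
      · simp [hi, hzero i (by omega), hzero j hj]
    · have := (hpos i).mpr (by omega)
      have := (hpos j).mpr (by omega)
      rw [if_neg (by omega), add_zero, show lam i - lam j = lam i - 1 - (lam j - 1) by omega]
  have hswap : ∑ j ∈ range n, ∑ i ∈ range j,
      (if i < m ∧ m ≤ j then (q - 1) * q ^ (lam i - 1) * t ^ (j - i) else 0) =
        ∑ i ∈ range m, ∑ j ∈ Ico m n, (q - 1) * q ^ (lam i - 1) * t ^ (j - i) := by
    simp only [← sum_filter]
    exact sum_comm' fun j i => by simp only [mem_filter, mem_range, mem_Ico]; omega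
  have hgeom : ∀ i ∈ range m, (1 - t) * ∑ j ∈ Ico m n, (q - 1) * q ^ (lam i - 1) * t ^ (j - i) =
      (1 - q) * (q ^ (lam i - 1) * (t ^ (n - i) - t ^ (m - i))) := fun i hi => by
    rw [← mul_sum, mul_left_comm,
      one_sub_mul_sum_Ico_pow_sub t (mem_range.mp hi).le hmn]
    ring
  calc (1 - t) * pairSum q t n lam
      = (1 - t) * (pairSum q t n (fun i => lam i - 1) +
          ∑ i ∈ range m, ∑ j ∈ Ico m n, (q - 1) * q ^ (lam i - 1) * t ^ (j - i)) := by
        rw [pairSum, pairSum, ← hswap, ← sum_add_distrib]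
        exact congrArg _ (sum_congr rfl fun j _ =>
          (sum_congr rfl fun i hi => hterm j i (mem_range.mp hi)).trans sum_add_distrib)
    _ = _ := by rw [mul_add, mul_sum, sum_congr rfl hgeom, ← mul_sum]

theorem macdonaldRhs_eq_pred_add (hmn : m ≤ n) (hpos : ∀ i, 0 < lam i ↔ i < m) :
    macdonaldRhs q t n lam = macdonaldRhs q t n (fun i => lam i - 1) +
      (1 - q) * ∑ i ∈ range m, q ^ (lam i - 1) * t ^ (m - i) := by
  have hrow : ∑ i ∈ range n, (t - q ^ lam i * t ^ (n - i)) =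
      ∑ i ∈ range n, (t - q ^ (lam i - 1) * t ^ (n - i)) +
        ∑ i ∈ range m, (1 - q) * (q ^ (lam i - 1) * t ^ (n - i)) := by
    refine sum_range_eq_add_sum_range hmn (fun i hi => ?_) (fun i hi _ => ?_)
    · obtain ⟨k, hk⟩ : ∃ k, lam i = k + 1 := Nat.exists_eq_add_one.mpr ((hpos i).mpr hi)
      rw [hk, Nat.add_sub_cancel]
      ring
    · have : lam i = 0 := by have := hpos i; omega
      simp [this]
  rw [macdonaldRhs, macdonaldRhs, hrow, one_sub_mul_pairSum_eq_pred_add q t hmn hpos, ← mul_sum]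
  simp only [mul_sub, sum_sub_distrib]
  ring

theorem one_sub_mul_armLegSum_eq_macdonaldRhs (hanti : Antitone lam)
    (hbd : ∀ i, n ≤ i → lam i = 0) :
    (1 - q) * armLegSum q t n lam = macdonaldRhs q t n lam := by
  obtain ⟨N, hN⟩ : ∃ N, lam 0 = N := ⟨_, rfl⟩
  induction N generalizing lam with
  | zero =>
    obtain rfl : lam = fun _ => 0 := funext fun i => by have := hanti (Nat.zero_le i); omega
    simp [armLegSum, macdonaldRhs_zero]
  | succ N ih =>
    obtain ⟨m, hmn, hpos⟩ := exists_pos_iff_lt hanti hbd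
    rw [armLegSum_eq_pred_add q t hmn hpos, macdonaldRhs_eq_pred_add q t hmn hpos,
      ← ih (fun a b hab => Nat.sub_le_sub_right (hanti hab) 1) (fun i hi => by simp [hbd i hi])
        (by simp [hN])]
    ring

end

/-- Macdonald's identity: for a partition `λ` with at most `n` parts
(encoded as `lam : ℕ → ℕ`, weakly decreasing, with `lam i = 0` for `i ≥ n`),
`(1-q) Σ_{s∈λ} q^{a(s)} t^{ℓ(s)+1}
  = Σ_{i=1}^n (t - q^{λ_i} t^{n+1-i}) - (1-t) Σ_{1≤i<j≤n} q^{λ_i-λ_j} t^{j-i}`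
as an identity in any commutative ring. -/
theorem macdonald_arm_leg_identity {R : Type*} [CommRing R] (q t : R)
    (n : ℕ) (lam : ℕ → ℕ) (hmono : ∀ i j, i ≤ j → lam j ≤ lam i)
    (hbd : ∀ i, n ≤ i → lam i = 0) :
    (1 - q) * ∑ i ∈ Finset.range n, ∑ j ∈ Finset.range (lam i),
        q ^ (lam i - j - 1) *
          t ^ (((Finset.range n).filter (fun k => j < lam k)).card - i) =
      (∑ i ∈ Finset.range n, (t - q ^ (lam i) * t ^ (n - i))) -
        (1 - t) * ∑ j ∈ Finset.range n, ∑ i ∈ Finset.range j,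
          q ^ (lam i - lam j) * t ^ (j - i) :=
  one_sub_mul_armLegSum_eq_macdonaldRhs q t hmono hbd
end
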